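/- Fix an integer s ≥ 3 and let t = s+2. If R is a 𝒦_t-free weighted graph with d_{K_s}(R) = π_s(𝒦_t) whose number of vertices is minimum among all such graphs, then R admits an (s,1)-partition; that is, R has exactly s vertices, each of weight 1/s, and every edge weight equals 1/2. -/

import Mathlib

open Filter

structure WeightedGraph (V : Type) [Fintype V] where
  vw : V → ℝ
  ew : V → V → ℝ
  vw_nonneg : ∀ v, 0 ≤ vw v
  vw_le_one : ∀ v, vw v ≤ 1
  vw_sum : ∑ v, vw v = 1
  ew_nonneg : ∀ u v, 0 ≤ ew u v
  ew_le_one : ∀ u v, ew u v ≤ 1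
  ew_symm : ∀ u v, ew u v = ew v u
  ew_self : ∀ v, ew v v = 0

namespace WeightedGraph

variable {V : Type} [Fintype V]

/-- The `K_m`-density of a weighted graph. -/
noncomputable def density (R : WeightedGraph V) (m : ℕ) : ℝ :=
  ∑ σ : Fin m → V, (∏ i, R.vw (σ i)) *
    ∏ p ∈ Finset.univ.filter (fun p : Fin m × Fin m => p.1 < p.2), R.ew (σ p.1) (σ p.2)

/-- The simple graph `R_{>α}` of edges of weight greater than `α`. -/
def gtGraph (R : WeightedGraph V) (α : ℝ) : SimpleGraph V where
  Adj u v := u ≠ v ∧ α < R.ew u v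
  symm := by
    constructor
    intro u v h
    refine ⟨h.1.symm, ?_⟩
    rw [R.ew_symm v u]
    exact h.2
  loopless := by constructor; intro v h; exact h.1 rfl

/-- `R` is `𝒦_t`-free. -/
def KtFree (R : WeightedGraph V) (t : ℕ) : Prop :=
  ¬ ∃ S₁ S₂ : Finset V, S₂ ⊆ S₁ ∧ 1 ≤ S₂.card ∧ S₁.card + S₂.card = t ∧
      (R.gtGraph 0).IsClique (S₁ : Set V) ∧ (R.gtGraph (1/2)).IsClique (S₂ : Set V)

/-- The conditions (A1)–(A5) on a partition function `part`, for a `(b,a)`-partition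
with the number of parts `a` implicit in the type of `part`. -/
def IsBAPartition (R : WeightedGraph V) (s : ℕ) {a : ℕ} (part : V → Fin a) : Prop :=
  Function.Surjective part ∧
  (∀ u v : V, u ≠ v → R.ew u v = 1/2 ∨ R.ew u v = 1) ∧
  (∀ u v : V, u ≠ v → (R.ew u v = 1/2 ↔ part u = part v)) ∧
  (∀ u v : V, part u = part v → R.vw u = R.vw v) ∧
  (∀ i j : Fin a, (Finset.univ.filter fun x => part x = i).card ≤
      (Finset.univ.filter fun x => part x = j).card + 1) ∧
  (∀ u v : V, (Finset.univ.filter fun x => part x = part v).card ≤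
      (Finset.univ.filter fun x => part x = part u).card → R.vw u ≤ R.vw v) ∧
  ((a = 1 ∧ ∀ i : Fin a, (Finset.univ.filter fun x => part x = i).card = s) ∨
   (2 ≤ a ∧ ∀ i : Fin a, (Finset.univ.filter fun x => part x = i).card ≤ s - 1))

/-- `R` admits a `(b,a)`-partition (with clique parameter `s`). -/
def AdmitsPartition (R : WeightedGraph V) (s b a : ℕ) : Prop :=
  Fintype.card V = b ∧ 1 ≤ a ∧ ∃ part : V → Fin a, R.IsBAPartition s part

end WeightedGraph

/-- `π_s(𝒦_t)`: the supremum of the `K_s`-density over all `𝒦_t`-free weighted graphs. -/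
noncomputable def piSup (s t : ℕ) : ℝ :=
  sSup {x : ℝ | ∃ (V : Type) (_ : Fintype V) (R : WeightedGraph V),
    R.KtFree t ∧ R.density s = x}

/-- The independence number of a simple graph. -/
noncomputable def indepNum {α : Type*} (G : SimpleGraph α) : ℕ :=
  sSup {k : ℕ | ∃ S : Finset α, (Gᶜ).IsNClique k S}

/-- The number `N(K_s, G)` of `s`-cliques of `G`. -/
noncomputable def cliqueCount {α : Type*} (G : SimpleGraph α) (s : ℕ) : ℕ :=
  Set.ncard {S : Finset α | G.IsNClique s S}

/-- The Ramsey–Turán number `RT(n, K_s, K_t, ℓ)`. -/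
noncomputable def RT (n s t : ℕ) (ℓ : ℝ) : ℕ :=
  sSup {N : ℕ | ∃ G : SimpleGraph (Fin n),
    G.CliqueFree t ∧ ((indepNum G : ℝ) < ℓ) ∧ N = cliqueCount G s}

/-!
An edge of weight `> 1/2` inside an `s`-clique of `R_{>0}` would produce a `𝒦_{s+2}`, so every
term of `d_{K_s}(R)` has all its edge weights `≤ 1/2`, and
`d_{K_s}(R) ≤ s! 2^{-(s choose 2)} λ` with `λ = ∑_{S an s-clique of R_{>0}} ∏_{v ∈ S} w(v)`.
As `R_{>0}` is `K_{s+1}`-free, Zykov symmetrization (the Motzkin–Straus argument) gives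
`λ ≤ s^{-s}`, which the complete graph on `s` vertices of weight `1/s` and edge weights `1/2`
attains. Hence `π_s(𝒦_{s+2}) = s! s^{-s} 2^{-(s choose 2)}` and a minimal extremal graph has
exactly `s` vertices; equality in AM-GM then forces all vertex weights to be `1/s`, and equality
in the edge bound forces all edge weights to be `1/2`.
-/

open Finset
open scoped Nat

namespace Finset

variable {ι : Type*} {T : Finset ι} {w : ι → ℝ}

theorem prod_le_inv_card_pow_of_sum_eq_one (h0 : ∀ i ∈ T, 0 ≤ w i) (h1 : ∑ i ∈ T, w i = 1) :
    ∏ i ∈ T, w i ≤ (#T : ℝ)⁻¹ ^ #T := by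
  have hT : #T ≠ 0 := (nonempty_of_sum_ne_zero (h1 ▸ one_ne_zero)).card_pos.ne'
  have amgm : ∏ i ∈ T, w i ^ (#T : ℝ)⁻¹ ≤ ∑ i ∈ T, (#T : ℝ)⁻¹ * w i :=
    Real.geom_mean_le_arith_mean_weighted T _ w (fun _ _ => by positivity) (by simp [hT]) h0
  rw [Real.finsetProd_rpow T w h0, ← mul_sum, h1, mul_one] at amgm
  calc ∏ i ∈ T, w i = ((∏ i ∈ T, w i) ^ (#T : ℝ)⁻¹) ^ #T :=
        (Real.rpow_inv_natCast_pow (prod_nonneg h0) hT).symm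
    _ ≤ (#T : ℝ)⁻¹ ^ #T := by gcongr; exact Real.rpow_nonneg (prod_nonneg h0) _

theorem eq_inv_card_of_prod_eq_inv_card_pow (h0 : ∀ i ∈ T, 0 ≤ w i) (h1 : ∑ i ∈ T, w i = 1)
    (heq : ∏ i ∈ T, w i = (#T : ℝ)⁻¹ ^ #T) : ∀ i ∈ T, w i = (#T : ℝ)⁻¹ := by
  have hT : #T ≠ 0 := (nonempty_of_sum_ne_zero (h1 ▸ one_ne_zero)).card_pos.ne'
  have hmean : ∑ i ∈ T, (#T : ℝ)⁻¹ * w i = (#T : ℝ)⁻¹ := by rw [← mul_sum, h1, mul_one]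
  have hgeom : ∏ i ∈ T, w i ^ (#T : ℝ)⁻¹ = (#T : ℝ)⁻¹ := by
    rw [Real.finsetProd_rpow T w h0, heq, Real.pow_rpow_inv_natCast (by positivity) hT]
  have := (Real.geom_mean_eq_arith_mean_weighted_iff_of_pos' T (fun _ => (#T : ℝ)⁻¹) w
    (fun _ _ => by positivity) (by simp [hT]) h0).1 (hgeom.trans hmean.symm)
  simpa only [hmean] using this

theorem eq_of_prod_eq_pow_card {c : ℝ} (hc : 0 < c) (h0 : ∀ i ∈ T, 0 ≤ w i)
    (hle : ∀ i ∈ T, w i ≤ c) (hprod : ∏ i ∈ T, w i = c ^ #T) : ∀ i ∈ T, w i = c := by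
  by_contra! ⟨i, hi, hne⟩
  have hpos : ∀ j ∈ T, 0 < w j := fun j hj =>
    (h0 j hj).lt_of_ne' (prod_ne_zero_iff.1 (hprod ▸ (pow_pos hc _).ne') j hj)
  have := prod_lt_prod hpos hle ⟨i, hi, (hle i hi).lt_of_ne hne⟩
  rw [hprod, prod_const] at this
  exact this.false

end Finset

section TransferWeight

variable {V : Type*} [DecidableEq V]

noncomputable def transferWeight (w : V → ℝ) (u v : V) : V → ℝ :=
  w + Pi.single v (w u) - Pi.single u (w u)

variable {w : V → ℝ} {u v : V}

theorem transferWeight_apply_left (huv : u ≠ v) : transferWeight w u v u = 0 := by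
  simp [transferWeight, huv]

theorem transferWeight_apply_right (huv : u ≠ v) : transferWeight w u v v = w u + w v := by
  simp [transferWeight, huv.symm, add_comm]

theorem transferWeight_apply_of_ne {x : V} (hxu : x ≠ u) (hxv : x ≠ v) :
    transferWeight w u v x = w x := by
  simp [transferWeight, hxu, hxv]

theorem transferWeight_nonneg (huv : u ≠ v) (h0 : ∀ x, 0 ≤ w x) (x : V) :
    0 ≤ transferWeight w u v x := by
  by_cases hxu : x = u
  · rw [hxu, transferWeight_apply_left huv]
  by_cases hxv : x = v
  · rw [hxv, transferWeight_apply_right huv]; linarith [h0 u, h0 v]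
  · rw [transferWeight_apply_of_ne hxu hxv]; exact h0 x

theorem sum_transferWeight [Fintype V] : ∑ x, transferWeight w u v x = ∑ x, w x := by
  simp [transferWeight, sum_add_distrib, sum_sub_distrib]

theorem prod_transferWeight_of_notMem {S : Finset V} (hu : u ∉ S) (hv : v ∉ S) :
    ∏ x ∈ S, transferWeight w u v x = ∏ x ∈ S, w x :=
  prod_congr rfl fun _ hx =>
    transferWeight_apply_of_ne (ne_of_mem_of_not_mem hx hu) (ne_of_mem_of_not_mem hx hv)

theorem card_support_transferWeight_lt [Fintype V] (huv : u ≠ v) (hu : w u ≠ 0) (hv : w v ≠ 0) :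
    #{x | transferWeight w u v x ≠ 0} < #{x | w x ≠ 0} := by
  refine card_lt_card ⟨fun x hx => ?_, fun hsub => ?_⟩
  · rw [mem_filter] at hx ⊢
    refine ⟨mem_univ x, fun hx0 => hx.2 ?_⟩
    by_cases hxv : x = v
    · exact (hv (hxv ▸ hx0)).elim
    by_cases hxu : x = u
    · rw [hxu, transferWeight_apply_left huv]
    · rw [transferWeight_apply_of_ne hxu hxv, hx0]
  · simpa [transferWeight_apply_left huv] using hsub (mem_filter.2 ⟨mem_univ u, hu⟩)

end TransferWeight

namespace SimpleGraph

theorem IsClique.card_le_of_cliqueFree {V : Type*} {G : SimpleGraph V} {s : ℕ} {T : Finset V}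
    (hT : G.IsClique (T : Set V)) (hG : G.CliqueFree (s + 1)) : #T ≤ s := by
  by_contra! h
  obtain ⟨U, hUT, hU⟩ := exists_subset_card_eq h
  exact hG U ⟨hT.subset (coe_subset.2 hUT), hU⟩

variable {V : Type*} [Fintype V] [DecidableEq V] (G : SimpleGraph V) [DecidableRel G.Adj] (s : ℕ)

noncomputable def cliqueWeight (w : V → ℝ) : ℝ :=
  ∑ S ∈ G.cliqueFinset s, ∏ v ∈ S, w v

/-- `∂ (cliqueWeight G s w) / ∂ (w x)`, the clique weight being multilinear in `w`. -/
noncomputable def linkWeight (w : V → ℝ) (x : V) : ℝ :=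
  ∑ S ∈ G.cliqueFinset s with x ∈ S, ∏ y ∈ S.erase x, w y

variable {G s}

theorem notMem_of_mem_cliqueFinset_of_not_adj {S : Finset V} {u v : V}
    (hS : S ∈ G.cliqueFinset s) (hv : v ∈ S) (huv : u ≠ v) (hadj : ¬G.Adj u v) : u ∉ S :=
  fun hu => hadj ((mem_cliqueFinset_iff.1 hS).1 hu hv huv)

variable (G s)

theorem sum_prod_filter_mem_eq_mul_linkWeight (w : V → ℝ) (x : V) :
    ∑ S ∈ G.cliqueFinset s with x ∈ S, ∏ v ∈ S, w v = w x * G.linkWeight s w x := by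
  rw [linkWeight, mul_sum]
  exact sum_congr rfl fun S hS => (mul_prod_erase S w (mem_filter.1 hS).2).symm

theorem cliqueWeight_eq_of_not_adj {u v : V} (huv : u ≠ v) (hadj : ¬G.Adj u v) (w : V → ℝ) :
    G.cliqueWeight s w = w u * G.linkWeight s w u + w v * G.linkWeight s w v +
      ∑ S ∈ G.cliqueFinset s with u ∉ S ∧ v ∉ S, ∏ x ∈ S, w x := by
  have hv : {S ∈ {S ∈ G.cliqueFinset s | u ∉ S} | v ∈ S} = {S ∈ G.cliqueFinset s | v ∈ S} := by
    ext S
    simp only [mem_filter]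
    exact ⟨fun h => ⟨h.1.1, h.2⟩, fun h =>
      ⟨⟨h.1, notMem_of_mem_cliqueFinset_of_not_adj h.1 h.2 huv hadj⟩, h.2⟩⟩
  rw [cliqueWeight, ← sum_filter_add_sum_filter_not _ (u ∈ ·),
    ← sum_filter_add_sum_filter_not {S ∈ G.cliqueFinset s | u ∉ S} (v ∈ ·), hv, filter_filter,
    sum_prod_filter_mem_eq_mul_linkWeight, sum_prod_filter_mem_eq_mul_linkWeight, add_assoc]

/-- Zykov symmetrization: as `cliqueWeight` is affine along `w u + w v = const` when `u, v` are
non-adjacent, moving all weight to the vertex with the larger link does not decrease it. -/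
theorem cliqueWeight_le_cliqueWeight_transferWeight {u v : V} (huv : u ≠ v) (hadj : ¬G.Adj u v)
    {w : V → ℝ} (hu : 0 ≤ w u) (hlink : G.linkWeight s w u ≤ G.linkWeight s w v) :
    G.cliqueWeight s w ≤ G.cliqueWeight s (transferWeight w u v) := by
  have hlink' : G.linkWeight s (transferWeight w u v) v = G.linkWeight s w v :=
    sum_congr rfl fun S hS => prod_transferWeight_of_notMem
      (fun h => notMem_of_mem_cliqueFinset_of_not_adj (mem_filter.1 hS).1 (mem_filter.1 hS).2
        huv hadj (mem_of_mem_erase h))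
      (notMem_erase v S)
  have hrest : ∑ S ∈ G.cliqueFinset s with u ∉ S ∧ v ∉ S, ∏ x ∈ S, transferWeight w u v x =
      ∑ S ∈ G.cliqueFinset s with u ∉ S ∧ v ∉ S, ∏ x ∈ S, w x :=
    sum_congr rfl fun S hS => prod_transferWeight_of_notMem (mem_filter.1 hS).2.1
      (mem_filter.1 hS).2.2
  rw [cliqueWeight_eq_of_not_adj G s huv hadj, cliqueWeight_eq_of_not_adj G s huv hadj, hlink',
    hrest, transferWeight_apply_left huv, transferWeight_apply_right huv]
  nlinarith [mul_le_mul_of_nonneg_left hlink hu]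

variable {G s}

theorem cliqueWeight_le_of_isClique_support (hG : G.CliqueFree (s + 1)) {w : V → ℝ}
    (h0 : ∀ v, 0 ≤ w v) (h1 : ∑ v, w v = 1) (hT : G.IsClique (({x | w x ≠ 0} : Finset V) : Set V)) :
    G.cliqueWeight s w ≤ (s : ℝ)⁻¹ ^ s := by
  set T : Finset V := {x | w x ≠ 0}
  have hsupp : ∀ S ∈ G.cliqueFinset s, ∏ v ∈ S, w v ≠ 0 → S = T := fun S hS hne =>
    eq_of_subset_of_card_le
      (fun x hx => mem_filter.2 ⟨mem_univ x, fun h => hne (prod_eq_zero hx h)⟩)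
      ((mem_cliqueFinset_iff.1 hS).2 ▸ hT.card_le_of_cliqueFree hG)
  by_cases hTs : #T = s
  · rw [cliqueWeight, sum_eq_single_of_mem T (mem_cliqueFinset_iff.2 ⟨hT, hTs⟩)
      fun S hS hne => not_not.1 (mt (hsupp S hS) hne), ← hTs]
    exact prod_le_inv_card_pow_of_sum_eq_one (fun v _ => h0 v) (by rw [sum_filter_ne_zero, h1])
  · rw [cliqueWeight, sum_eq_zero fun S hS => not_not.1 fun hne =>
      hTs (hsupp S hS hne ▸ (mem_cliqueFinset_iff.1 hS).2)]
    positivity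

theorem cliqueWeight_le_of_cliqueFree (hG : G.CliqueFree (s + 1)) {w : V → ℝ}
    (h0 : ∀ v, 0 ≤ w v) (h1 : ∑ v, w v = 1) : G.cliqueWeight s w ≤ (s : ℝ)⁻¹ ^ s := by
  induction hn : #{x | w x ≠ 0} using Nat.strong_induction_on generalizing w with
  | _ n ih =>
    by_cases hT : G.IsClique (({x | w x ≠ 0} : Finset V) : Set V)
    · exact cliqueWeight_le_of_isClique_support hG h0 h1 hT
    obtain ⟨u, hu, v, hv, huv, hadj⟩ : ∃ u, w u ≠ 0 ∧ ∃ v, w v ≠ 0 ∧ u ≠ v ∧ ¬G.Adj u v := by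
      simpa [IsClique, Set.Pairwise] using hT
    have transfer : ∀ u v, u ≠ v → ¬G.Adj u v → w u ≠ 0 → w v ≠ 0 →
        G.linkWeight s w u ≤ G.linkWeight s w v → G.cliqueWeight s w ≤ (s : ℝ)⁻¹ ^ s :=
      fun u v huv hadj hu hv hlink =>
        (G.cliqueWeight_le_cliqueWeight_transferWeight s huv hadj (h0 u) hlink).trans <|
          ih _ (hn ▸ card_support_transferWeight_lt huv hu hv) (transferWeight_nonneg huv h0)
            (sum_transferWeight.trans h1) rfl
    rcases le_total (G.linkWeight s w u) (G.linkWeight s w v) with hlink | hlink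
    · exact transfer u v huv hadj hu hv hlink
    · exact transfer v u huv.symm (fun h => hadj h.symm) hv hu hlink

theorem cliqueWeight_le_prod_of_card_eq (hV : Fintype.card V = s) {w : V → ℝ}
    (h0 : ∀ v, 0 ≤ w v) : G.cliqueWeight s w ≤ ∏ v, w v :=
  calc G.cliqueWeight s w ≤ ∑ S ∈ {univ}, ∏ v ∈ S, w v :=
        sum_le_sum_of_subset_of_nonneg
          (fun S hS => mem_singleton.2
            (eq_univ_of_card S ((mem_cliqueFinset_iff.1 hS).2.trans hV.symm)))
          fun _ _ _ => prod_nonneg fun _ _ => h0 _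
    _ = ∏ v, w v := sum_singleton _ _

end SimpleGraph

section Enumerations

variable {V : Type*} [Fintype V] [DecidableEq V] {s : ℕ}

theorem card_filter_image_eq_factorial {S : Finset V} (hS : #S = s) :
    #{σ : Fin s → V | univ.image σ = S} = s ! := by
  have e : Fin s ≃ S := (Fintype.equivFinOfCardEq (by rw [Fintype.card_coe, hS])).symm
  rw [← Fintype.card_subtype]
  refine (Fintype.card_congr ?_).trans ((Fintype.card_equiv e).trans (by rw [Fintype.card_fin]))
  refine
    { toFun := fun σ => Equiv.ofBijective
        (fun i => ⟨σ.1 i, (Finset.ext_iff.1 σ.2 _).1 (mem_image_of_mem _ (mem_univ i))⟩)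
        ((Fintype.bijective_iff_surjective_and_card _).2 ⟨fun y => ?_, by simp [hS]⟩)
      invFun := fun e => ⟨Subtype.val ∘ e, ?_⟩
      left_inv := fun _ => rfl
      right_inv := fun _ => Equiv.ext fun _ => rfl }
  · obtain ⟨i, -, hi⟩ := mem_image.1 ((Finset.ext_iff.1 σ.2 _).2 y.2)
    exact ⟨i, Subtype.ext hi⟩
  · ext x
    simpa using ⟨fun ⟨i, hi⟩ => hi ▸ (e i).2, fun hx => ⟨e.symm ⟨x, hx⟩, by simp⟩⟩

theorem card_filter_injective_eq_factorial (hV : Fintype.card V = s) :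
    #{σ : Fin s → V | Function.Injective σ} = s ! := by
  rw [← Fintype.card_subtype, Fintype.card_congr (Equiv.subtypeInjectiveEquivEmbedding _ _),
    Fintype.card_embedding_eq, Fintype.card_fin, hV, Nat.descFactorial_self]

theorem sum_prod_comp_filter_image_eq {S : Finset V} (hS : #S = s) (w : V → ℝ) :
    ∑ σ : Fin s → V with univ.image σ = S, ∏ i, w (σ i) = s ! * ∏ v ∈ S, w v := by
  rw [← card_filter_image_eq_factorial hS, ← nsmul_eq_mul, ← sum_const]
  refine sum_congr rfl fun σ hσ => ?_
  have hσS : univ.image σ = S := (mem_filter.1 hσ).2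
  rw [← hσS, prod_image (card_image_iff.1 (by rw [hσS, hS, card_univ, Fintype.card_fin]))]

end Enumerations

namespace WeightedGraph

variable {V : Type} [Fintype V] (R : WeightedGraph V) {m s : ℕ}

noncomputable instance (α : ℝ) : DecidableRel (R.gtGraph α).Adj := Classical.decRel _

def ltPairs (m : ℕ) : Finset (Fin m × Fin m) := {p | p.1 < p.2}

noncomputable def edgeProd (σ : Fin m → V) : ℝ := ∏ p ∈ ltPairs m, R.ew (σ p.1) (σ p.2)

theorem density_eq_sum_edgeProd (m : ℕ) :
    R.density m = ∑ σ : Fin m → V, (∏ i, R.vw (σ i)) * R.edgeProd σ := rfl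

theorem density_eq_of_vw_eq {c : ℝ} (hvw : ∀ v, R.vw v = c) (m : ℕ) :
    R.density m = c ^ m * ∑ σ : Fin m → V, R.edgeProd σ := by
  simp [density_eq_sum_edgeProd, hvw, mul_sum]

variable {R}

theorem edgeProd_eq_zero {σ : Fin m → V} {i j : Fin m} (hij : i ≠ j) (h : R.ew (σ i) (σ j) = 0) :
    R.edgeProd σ = 0 := by
  rcases hij.lt_or_gt with hlt | hlt
  · exact prod_eq_zero (mem_filter.2 ⟨mem_univ (i, j), hlt⟩) h
  · exact prod_eq_zero (mem_filter.2 ⟨mem_univ (j, i), hlt⟩) (R.ew_symm _ _ ▸ h)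

theorem injective_of_edgeProd_ne_zero {σ : Fin m → V} (h : R.edgeProd σ ≠ 0) :
    Function.Injective σ := fun _ _ hij =>
  by_contra fun hne => h (edgeProd_eq_zero hne (hij ▸ R.ew_self _))

theorem isClique_range_of_edgeProd_ne_zero {σ : Fin m → V} (h : R.edgeProd σ ≠ 0) :
    (R.gtGraph 0).IsClique (Set.range σ) := by
  rintro _ ⟨i, rfl⟩ _ ⟨j, rfl⟩ hne
  exact ⟨hne, (R.ew_nonneg _ _).lt_of_ne' fun h0 =>
    h (edgeProd_eq_zero (fun hij => hne (congrArg σ hij)) h0)⟩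

theorem image_mem_cliqueFinset_of_edgeProd_ne_zero [DecidableEq V] {σ : Fin m → V}
    (h : R.edgeProd σ ≠ 0) : univ.image σ ∈ (R.gtGraph 0).cliqueFinset m := by
  refine SimpleGraph.mem_cliqueFinset_iff.2 ⟨?_, ?_⟩
  · rw [coe_image, coe_univ, Set.image_univ]
    exact isClique_range_of_edgeProd_ne_zero h
  · rw [card_image_of_injective _ (injective_of_edgeProd_ne_zero h), card_univ, Fintype.card_fin]

theorem le_card_of_density_ne_zero (h : R.density m ≠ 0) : m ≤ Fintype.card V := by
  obtain ⟨σ, -, hσ⟩ := exists_ne_zero_of_sum_ne_zero h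
  simpa using
    Fintype.card_le_of_injective σ (injective_of_edgeProd_ne_zero (right_ne_zero_of_mul hσ))

namespace KtFree

theorem cliqueFree_gtGraph_zero (hfree : R.KtFree (s + 2)) : (R.gtGraph 0).CliqueFree (s + 1) := by
  intro S hS
  obtain ⟨v, hv⟩ : S.Nonempty := card_pos.1 (hS.2 ▸ s.succ_pos)
  exact hfree ⟨S, {v}, singleton_subset_iff.2 hv, by simp, by simp [hS.2], hS.1, by simp⟩

theorem ew_le_half (hfree : R.KtFree (s + 2)) {S : Finset V} (hS : (R.gtGraph 0).IsNClique s S)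
    {u v : V} (hu : u ∈ S) (hv : v ∈ S) (huv : u ≠ v) : R.ew u v ≤ 1 / 2 := by
  classical
  by_contra! h
  refine hfree ⟨S, {u, v}, insert_subset hu (singleton_subset_iff.2 hv), by simp, ?_, hS.1, ?_⟩
  · rw [hS.2, card_pair huv]
  · rw [coe_pair, SimpleGraph.isClique_pair]
    exact fun _ => ⟨huv, h⟩

theorem ew_le_half_of_edgeProd_ne_zero (hfree : R.KtFree (m + 2)) {σ : Fin m → V}
    (h : R.edgeProd σ ≠ 0) {i j : Fin m} (hij : i ≠ j) : R.ew (σ i) (σ j) ≤ 1 / 2 := by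
  classical
  exact hfree.ew_le_half
    (SimpleGraph.mem_cliqueFinset_iff.1 (image_mem_cliqueFinset_of_edgeProd_ne_zero h))
    (mem_image_of_mem σ (mem_univ i)) (mem_image_of_mem σ (mem_univ j))
    ((injective_of_edgeProd_ne_zero h).ne hij)

theorem edgeProd_le (hfree : R.KtFree (m + 2)) (σ : Fin m → V) :
    R.edgeProd σ ≤ (1 / 2) ^ #(ltPairs m) := by
  by_cases h : R.edgeProd σ = 0
  · rw [h]; positivity
  calc R.edgeProd σ ≤ ∏ _p ∈ ltPairs m, (1 / 2 : ℝ) :=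
        prod_le_prod (fun _ _ => R.ew_nonneg _ _) fun p hp =>
          hfree.ew_le_half_of_edgeProd_ne_zero h (mem_filter.1 hp).2.ne
    _ = (1 / 2) ^ #(ltPairs m) := prod_const _

theorem ew_eq_half_of_edgeProd_eq (hfree : R.KtFree (m + 2)) {σ : Fin m → V}
    (h : R.edgeProd σ = (1 / 2) ^ #(ltPairs m)) {i j : Fin m} (hij : i < j) :
    R.ew (σ i) (σ j) = 1 / 2 :=
  eq_of_prod_eq_pow_card (by norm_num) (fun _ _ => R.ew_nonneg _ _)
    (fun p hp => hfree.ew_le_half_of_edgeProd_ne_zero (h ▸ by positivity) (mem_filter.1 hp).2.ne)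
    h (i, j) (mem_filter.2 ⟨mem_univ _, hij⟩)

theorem density_le_cliqueWeight [DecidableEq V] (hfree : R.KtFree (s + 2)) :
    R.density s ≤ s ! * (R.gtGraph 0).cliqueWeight s R.vw * (1 / 2) ^ #(ltPairs s) := by
  set G := R.gtGraph 0
  calc R.density s
      = ∑ σ : Fin s → V with univ.image σ ∈ G.cliqueFinset s, (∏ i, R.vw (σ i)) * R.edgeProd σ :=
        (sum_filter_of_ne fun σ _ hσ =>
          image_mem_cliqueFinset_of_edgeProd_ne_zero (right_ne_zero_of_mul hσ)).symm
    _ ≤ ∑ σ : Fin s → V with univ.image σ ∈ G.cliqueFinset s,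
          (∏ i, R.vw (σ i)) * (1 / 2) ^ #(ltPairs s) :=
        sum_le_sum fun σ _ => mul_le_mul_of_nonneg_left (hfree.edgeProd_le σ)
          (prod_nonneg fun _ _ => R.vw_nonneg _)
    _ = ∑ S ∈ G.cliqueFinset s, ∑ σ : Fin s → V with univ.image σ = S,
          (∏ i, R.vw (σ i)) * (1 / 2) ^ #(ltPairs s) :=
        (sum_fiberwise_eq_sum_filter _ _ _ _).symm
    _ = s ! * G.cliqueWeight s R.vw * (1 / 2) ^ #(ltPairs s) := by
        rw [SimpleGraph.cliqueWeight, mul_sum, sum_mul]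
        refine sum_congr rfl fun S hS => ?_
        rw [← sum_mul, sum_prod_comp_filter_image_eq (SimpleGraph.mem_cliqueFinset_iff.1 hS).2]

end KtFree

/-- The value of `π_s(𝒦_{s+2})`. -/
noncomputable def extremalDensity (s : ℕ) : ℝ := s ! * (s : ℝ)⁻¹ ^ s * (1 / 2) ^ #(ltPairs s)

theorem KtFree.density_le_extremalDensity (hfree : R.KtFree (s + 2)) :
    R.density s ≤ extremalDensity s := by
  classical
  calc R.density s ≤ s ! * (R.gtGraph 0).cliqueWeight s R.vw * (1 / 2) ^ #(ltPairs s) :=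
        hfree.density_le_cliqueWeight
    _ ≤ extremalDensity s := by
        unfold extremalDensity
        gcongr
        exact SimpleGraph.cliqueWeight_le_of_cliqueFree hfree.cliqueFree_gtGraph_zero R.vw_nonneg
          R.vw_sum

noncomputable def halfComplete (s : ℕ) (hs : 0 < s) : WeightedGraph (Fin s) where
  vw _ := (s : ℝ)⁻¹
  ew u v := if u = v then 0 else 1 / 2
  vw_nonneg _ := by positivity
  vw_le_one _ := inv_le_one_of_one_le₀ (by exact_mod_cast hs)
  vw_sum := by simp [hs.ne']
  ew_nonneg u v := by split_ifs <;> norm_num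
  ew_le_one u v := by split_ifs <;> norm_num
  ew_symm u v := by simp only [eq_comm]
  ew_self _ := if_pos rfl

theorem ktFree_halfComplete (hs : 0 < s) : (halfComplete s hs).KtFree (s + 2) := by
  rintro ⟨S₁, S₂, -, -, hcard, -, h₂⟩
  have h₂ : #S₂ ≤ 1 := card_le_one.2 fun a ha b hb => by_contra fun hab =>
    (h₂ ha hb hab).2.ne' (if_neg hab)
  have h₁ : #S₁ ≤ s := (card_le_univ S₁).trans_eq (Fintype.card_fin s)
  omega

theorem edgeProd_halfComplete_of_injective (hs : 0 < s) {σ : Fin s → Fin s}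
    (hσ : Function.Injective σ) : (halfComplete s hs).edgeProd σ = (1 / 2) ^ #(ltPairs s) :=
  (prod_congr rfl fun _ hp => if_neg (hσ.ne (mem_filter.1 hp).2.ne)).trans (prod_const _)

theorem density_halfComplete (hs : 0 < s) : (halfComplete s hs).density s = extremalDensity s := by
  classical
  rw [density_eq_of_vw_eq (c := (s : ℝ)⁻¹) _ fun _ => rfl,
    ← sum_filter_of_ne fun _ _ h => injective_of_edgeProd_ne_zero h,
    sum_congr rfl fun _ hσ => edgeProd_halfComplete_of_injective hs (mem_filter.1 hσ).2, sum_const,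
    card_filter_injective_eq_factorial (Fintype.card_fin s), nsmul_eq_mul, extremalDensity]
  ring

theorem piSup_eq_extremalDensity (hs : 0 < s) : piSup s (s + 2) = extremalDensity s :=
  IsGreatest.csSup_eq ⟨⟨Fin s, inferInstance, halfComplete s hs, ktFree_halfComplete hs,
    density_halfComplete hs⟩, by
      rintro _ ⟨V, _, R, hfree, rfl⟩
      exact hfree.density_le_extremalDensity⟩

namespace KtFree

theorem vw_eq_of_density_eq (hfree : R.KtFree (s + 2)) (hV : Fintype.card V = s)
    (hd : R.density s = extremalDensity s) : ∀ v, R.vw v = (s : ℝ)⁻¹ := by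
  classical
  have hle : extremalDensity s ≤ s ! * (∏ v, R.vw v) * (1 / 2) ^ #(ltPairs s) :=
    hd ▸ hfree.density_le_cliqueWeight.trans
      (by gcongr; exact SimpleGraph.cliqueWeight_le_prod_of_card_eq hV R.vw_nonneg)
  have hprod : ∏ v, R.vw v = (#(univ : Finset V) : ℝ)⁻¹ ^ #(univ : Finset V) := by
    refine le_antisymm (prod_le_inv_card_pow_of_sum_eq_one (fun v _ => R.vw_nonneg v) R.vw_sum) ?_
    rw [card_univ, hV]
    exact le_of_mul_le_mul_left (le_of_mul_le_mul_right hle (by positivity)) (by positivity)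
  intro v
  simpa [hV] using eq_inv_card_of_prod_eq_inv_card_pow (fun v _ => R.vw_nonneg v) R.vw_sum hprod v
    (mem_univ v)

theorem ew_eq_half_of_density_eq (hfree : R.KtFree (s + 2)) (hV : Fintype.card V = s)
    (hd : R.density s = extremalDensity s) {u v : V} (huv : u ≠ v) : R.ew u v = 1 / 2 := by
  classical
  have hs : 0 < s := hV ▸ Fintype.card_pos_iff.2 ⟨u⟩
  have hsum : ∑ σ : Fin s → V with Function.Injective σ, R.edgeProd σ =
      ∑ σ : Fin s → V with Function.Injective σ, (1 / 2 : ℝ) ^ #(ltPairs s) := by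
    rw [sum_filter_of_ne fun _ _ h => injective_of_edgeProd_ne_zero h, sum_const,
      card_filter_injective_eq_factorial hV, nsmul_eq_mul]
    refine mul_left_cancel₀ (pow_ne_zero s (inv_ne_zero (Nat.cast_ne_zero.2 hs.ne'))) ?_
    rw [← density_eq_of_vw_eq R (hfree.vw_eq_of_density_eq hV hd), hd, extremalDensity]
    ring
  set e : Fin s ≃ V := (Fintype.equivFinOfCardEq hV).symm
  have he : R.edgeProd e = (1 / 2) ^ #(ltPairs s) :=
    (sum_eq_sum_iff_of_le fun σ _ => hfree.edgeProd_le σ).1 hsum e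
      (mem_filter.2 ⟨mem_univ _, e.injective⟩)
  have key : ∀ x y : V, e.symm x < e.symm y → R.ew x y = 1 / 2 := fun x y h => by
    simpa using hfree.ew_eq_half_of_edgeProd_eq he h
  rcases (e.symm.injective.ne huv).lt_or_gt with h | h
  · exact key u v h
  · rw [R.ew_symm]; exact key v u h

end KtFree

theorem admitsPartition_one (hs : 0 < s) (hV : Fintype.card V = s) (hvw : ∀ u v, R.vw u = R.vw v)
    (hew : ∀ u v, u ≠ v → R.ew u v = 1 / 2) : R.AdmitsPartition s s 1 := by
  have : Nonempty V := Fintype.card_pos_iff.1 (hV ▸ hs)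
  refine ⟨hV, le_rfl, fun _ => 0, fun _ => ⟨Classical.arbitrary V, Subsingleton.elim _ _⟩,
    fun u v h => .inl (hew u v h),
    fun u v h => ⟨fun _ => Subsingleton.elim _ _, fun _ => hew u v h⟩,
    fun u v _ => hvw u v, fun i j => ?_, fun u v _ => (hvw u v).le, .inl ⟨rfl, fun i => ?_⟩⟩ <;>
  simp [Subsingleton.elim _ (0 : Fin 1), hV]

end WeightedGraph

open WeightedGraph

theorem minimal_extremal_t_eq_s_add_two {V : Type} [Fintype V]
    (s : ℕ) (hs : 3 ≤ s)
    (R : WeightedGraph V) (hfree : R.KtFree (s + 2))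
    (hmax : R.density s = piSup s (s + 2))
    (hmin : ∀ (W : Type) (_ : Fintype W) (R' : WeightedGraph W),
      R'.KtFree (s + 2) → R'.density s = piSup s (s + 2) →
        Fintype.card V ≤ Fintype.card W) :
    R.AdmitsPartition s s 1 ∧
    Fintype.card V = s ∧ (∀ v : V, R.vw v = 1 / (s : ℝ)) ∧
    (∀ u v : V, u ≠ v → R.ew u v = 1/2) := by
  have hs₀ : 0 < s := by omega
  have hd : R.density s = extremalDensity s := hmax.trans (piSup_eq_extremalDensity hs₀)
  have hd₀ : R.density s ≠ 0 := by rw [hd, extremalDensity]; positivity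
  have hV : Fintype.card V = s := by
    refine le_antisymm ?_ (le_card_of_density_ne_zero hd₀)
    simpa using hmin _ _ (halfComplete s hs₀) (ktFree_halfComplete hs₀)
      ((density_halfComplete hs₀).trans (piSup_eq_extremalDensity hs₀).symm)
  have hvw := hfree.vw_eq_of_density_eq hV hd
  have hew : ∀ u v : V, u ≠ v → R.ew u v = 1 / 2 := fun _ _ => hfree.ew_eq_half_of_density_eq hV hd
  exact ⟨admitsPartition_one hs₀ hV (fun u v => (hvw u).trans (hvw v).symm) hew, hV,
    fun v => (hvw v).trans (one_div _).symm, hew⟩
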